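/- arXiv:math/0607695 — 4 statements merged into one kernel-verified Lean document; each statement's English description precedes it below -/
import Mathlib

section
/- Let ψ be a wavelet of L²(ℝ) and for j ∈ ℤ define V_j to be the closed linear span of {ψ_{l,k} : l < j, k ∈ ℤ}. Then: (i) V_j ⊆ V_{j+1} for all j ∈ ℤ; (ii) for all j ∈ ℤ, f ∈ V_j if and only if the function x ↦ f(2x) belongs to V_{j+1}; (iii) ∪_{j∈ℤ} V_j is dense in L²(ℝ); (iv) ∩_{j∈ℤ} V_j = {0}; and (v′) V_0 is invariant under translation by every integer, i.e., T_m(V_0) ⊆ V_0 for all m ∈ ℤ. -/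
open MeasureTheory Real Set
open scoped Classical

noncomputable section

/-- The dilated-translated family `ψ_{j,k}(x) = 2^(j/2) ψ(2^j x - k)`. -/
def wavDT (ψ : ℝ → ℂ) (j k : ℤ) : ℝ → ℂ := fun x =>
  (((2 : ℝ) ^ ((j : ℝ) / 2) : ℝ) : ℂ) * ψ ((2 : ℝ) ^ j * x - (k : ℝ))

/-- `ψ` is an (orthonormal) wavelet of `L²(ℝ)`: the family `ψ_{j,k}`, realized as
elements of `L²(ℝ)`, is an orthonormal basis. -/
def IsWavelet (ψ : ℝ → ℂ) : Prop :=
  MemLp ψ 2 (volume : Measure ℝ) ∧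
  ∃ Ψ : ℤ × ℤ → Lp ℂ 2 (volume : Measure ℝ),
    (∀ p : ℤ × ℤ, (Ψ p : ℝ → ℂ) =ᵐ[(volume : Measure ℝ)] wavDT ψ p.1 p.2) ∧
    Orthonormal ℂ Ψ ∧
    ⊤ ≤ (Submodule.span ℂ (Set.range Ψ)).topologicalClosure

/-- The space `V_j`: closed linear span of `{ψ_{l,k} : l < j, k ∈ ℤ}` in `L²(ℝ)`. -/
def Vspace (ψ : ℝ → ℂ) (j : ℤ) : Submodule ℂ (Lp ℂ 2 (volume : Measure ℝ)) :=
  (Submodule.span ℂ {f : Lp ℂ 2 (volume : Measure ℝ) |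
    ∃ l k : ℤ, l < j ∧ (f : ℝ → ℂ) =ᵐ[(volume : Measure ℝ)] wavDT ψ l k}).topologicalClosure

/-- `T_α(V) ⊆ V` : the translation by `α` of every element of `V` is (a.e. equal to)
an element of `V`. -/
def TransInv (V : Submodule ℂ (Lp ℂ 2 (volume : Measure ℝ))) (α : ℝ) : Prop :=
  ∀ f ∈ V, ∃ g ∈ V, (g : ℝ → ℂ) =ᵐ[(volume : Measure ℝ)] fun x => f (x - α)

/-- `ψh` is the `L²`-Fourier transform (with normalization `ψ̂(ξ) = ∫ ψ(x) e^{-iξx} dx`,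
extended to `L²` by Plancherel) of `ψ`, characterized by the multiplication formula
`∫ ψ ĝ = ∫ ψ̂ g` for all `g ∈ L¹ ∩ L²`. -/
def IsL2FourierPair (ψ ψh : ℝ → ℂ) : Prop :=
  MemLp ψ 2 (volume : Measure ℝ) ∧ MemLp ψh 2 (volume : Measure ℝ) ∧
  ∀ g : ℝ → ℂ, Integrable g (volume : Measure ℝ) → MemLp g 2 (volume : Measure ℝ) →
    ∫ x : ℝ, ψ x * (∫ ξ : ℝ, g ξ * Complex.exp (-(Complex.I * (x : ℂ) * (ξ : ℂ)))) =
    ∫ ξ : ℝ, ψh ξ * g ξ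

/-- `𝓔(ψ) = {k ∈ ℤ : supp ψ̂ ∩ (supp ψ̂ + 2kπ) has positive measure}`, in terms of
a representative `ψh` of the Fourier transform of `ψ`. -/
def specE (ψh : ℝ → ℂ) : Set ℤ :=
  {k : ℤ | 0 < volume {ξ : ℝ | ψh ξ ≠ 0 ∧ ψh (ξ - 2 * (k : ℝ) * π) ≠ 0}}

def aN (n : ℕ) : ℝ := 2 ^ (n - 1) * π / (2 ^ n - 1)
def bN (n : ℕ) : ℝ := 2 * aN n
def cN (n : ℕ) : ℝ := 2 ^ (n - 1) * (2 ^ n - 2) * π / (2 ^ n - 1)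
def dN (n : ℕ) : ℝ := 2 ^ n * aN n
def eN (n : ℕ) : ℝ := (2 ^ n - 2) * π / (2 ^ n - 1)

/-- `S_n = S_n⁺ ∪ (−S_n⁺)`, where `S_n⁺ = [a_n,b_n] ∪ [c_n,d_n]`. -/
def Sset (n : ℕ) : Set ℝ :=
  (Icc (aN n) (bN n) ∪ Icc (cN n) (dN n)) ∪ (-(Icc (aN n) (bN n) ∪ Icc (cN n) (dN n)))

end

/-!
The `ψ_{l,k}` form a Hilbert basis and `V_j` is the closed span of the basis vectors with
`l < j`, so `f ∈ V_j` exactly when `⟪ψ_{l,k}, f⟫ = 0` for all `l ≥ j`. Nestedness, density of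
the union and triviality of the intersection are then statements about the index sets
`{l < j}`. Since `ψ_{l+1,k}(x) = √2 ψ_{l,k}(2x)`, the substitution `x ↦ 2x` turns
`⟪ψ_{l+1,k}, f(2·)⟫` into a nonzero multiple of `⟪ψ_{l,k}, f⟫`, which gives (ii). Translation
by `m ∈ ℤ` is unitary and, for `l ≥ 0`, `T_m ψ_{l,k-2^l m} = ψ_{l,k}`, so it preserves the
vanishing of the coefficients with `l ≥ 0`, which gives (v′).
-/

open Submodule
open scoped InnerProductSpace

namespace HilbertBasis

variable {ι 𝕜 E : Type*} [RCLike 𝕜] [NormedAddCommGroup E] [InnerProductSpace 𝕜 E]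
  (b : HilbertBasis ι 𝕜 E)

theorem mem_closure_span_image_iff {S : Set ι} {f : E} :
    f ∈ (span 𝕜 (b '' S)).topologicalClosure ↔ ∀ i ∉ S, ⟪b i, f⟫_𝕜 = 0 := by
  constructor
  · intro hf i hi
    have hle : (span 𝕜 (b '' S)).topologicalClosure ≤ (𝕜 ∙ b i)ᗮ := by
      refine topologicalClosure_minimal _ (span_le.2 ?_) (isClosed_orthogonal _)
      rintro _ ⟨j, hj, rfl⟩
      exact mem_orthogonal_singleton_iff_inner_right.2
        (b.orthonormal.inner_eq_zero (by rintro rfl; exact hi hj))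
    exact mem_orthogonal_singleton_iff_inner_right.1 (hle hf)
  · intro hf
    refine (span 𝕜 (b '' S)).isClosed_topologicalClosure.mem_of_tendsto (b.hasSum_repr f)
      (.of_forall fun s => sum_mem fun i _ => ?_)
    by_cases hi : i ∈ S
    · exact smul_mem _ _ (le_topologicalClosure _ (subset_span ⟨i, hi, rfl⟩))
    · rw [b.repr_apply_apply, hf i hi, zero_smul]
      exact zero_mem _

theorem dense_iUnion_closure_span_image {α : Type*} [Nonempty α] {S : α → Set ι}
    (hS : Directed (· ⊆ ·) S) (hcover : ∀ i, ∃ a, i ∈ S a) :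
    Dense (⋃ a, ((span 𝕜 (b '' S a)).topologicalClosure : Set E)) := by
  have hdir : Directed (· ≤ ·) fun a => span 𝕜 (b '' S a) :=
    Directed.mono_comp (· ⊆ ·) (g := fun s => span 𝕜 (b '' s))
      (fun _ _ h => span_mono (Set.image_mono h)) hS
  have hsup : ⨆ a, span 𝕜 (b '' S a) = span 𝕜 (Set.range b) := by
    rw [← span_iUnion, ← Set.image_iUnion, Set.iUnion_eq_univ_iff.2 hcover, Set.image_univ]
  refine Dense.mono (Set.iUnion_mono (s := fun a => (span 𝕜 (b '' S a) : Set E))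
    fun a => le_topologicalClosure _) ?_
  rw [← coe_iSup_of_directed _ hdir, dense_iff_topologicalClosure_eq_top, hsup]
  exact b.dense_span

theorem iInf_closure_span_image_eq_bot {α : Type*} {S : α → Set ι}
    (hS : ∀ i, ∃ a, i ∉ S a) : ⨅ a, (span 𝕜 (b '' S a)).topologicalClosure = ⊥ := by
  refine eq_bot_iff.2 fun f hf => (mem_bot 𝕜).2 (b.repr.injective ?_)
  ext i
  obtain ⟨a, hi⟩ := hS i
  rw [b.repr_apply_apply, map_zero, lp.coeFn_zero, Pi.zero_apply]
  exact (b.mem_closure_span_image_iff.1 (mem_iInf _ |>.1 hf a)) i hi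

theorem map_mem_closure_span_image {S : Set ι} (U : E →ₗᵢ[𝕜] E) (σ : ι → ι)
    (hσ : ∀ i ∉ S, σ i ∉ S ∧ U (b (σ i)) = b i) {f : E}
    (hf : f ∈ (span 𝕜 (b '' S)).topologicalClosure) :
    U f ∈ (span 𝕜 (b '' S)).topologicalClosure := by
  rw [b.mem_closure_span_image_iff] at hf ⊢
  intro i hi
  rw [← (hσ i hi).2, U.inner_map_map]
  exact hf _ (hσ i hi).1

end HilbertBasis

namespace MeasureTheory.L2

variable {𝕜 E : Type*} [RCLike 𝕜] [NormedAddCommGroup E] [InnerProductSpace 𝕜 E]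

theorem inner_eq_of_ae_eq_smul_comp_mul {f g f' g' : Lp E 2 (volume : Measure ℝ)} (c : 𝕜)
    (a : ℝ) (hf : f' =ᵐ[volume] fun x => c • f (a * x))
    (hg : g' =ᵐ[volume] fun x => g (a * x)) :
    ⟪f', g'⟫_𝕜 = (starRingEnd 𝕜) c * |a⁻¹| * ⟪f, g⟫_𝕜 := by
  rw [inner_def, inner_def, integral_congr_ae (hf.mp (hg.mono fun x hgx hfx => by
    rw [hfx, hgx, inner_smul_left])), integral_const_mul,
    Measure.integral_comp_mul_left (fun y => ⟪f y, g y⟫_𝕜), RCLike.real_smul_eq_coe_mul,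
    mul_assoc]

end MeasureTheory.L2

theorem Vspace_mono (ψ : ℝ → ℂ) : Monotone (Vspace ψ) := fun _ _ hij =>
  topologicalClosure_mono (span_mono fun _ ⟨l, k, hl, h⟩ => ⟨l, k, hl.trans_le hij, h⟩)

theorem wavDT_succ (ψ : ℝ → ℂ) (l k : ℤ) (x : ℝ) :
    wavDT ψ (l + 1) k x = (((2 : ℝ) ^ (2⁻¹ : ℝ) : ℝ) : ℂ) * wavDT ψ l k (2 * x) := by
  have hcoeff : (2 : ℝ) ^ (((l + 1 : ℤ) : ℝ) / 2) = (2 : ℝ) ^ (2⁻¹ : ℝ) * 2 ^ ((l : ℝ) / 2) := by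
    rw [← Real.rpow_add two_pos]
    push_cast
    ring_nf
  simp only [wavDT, hcoeff, zpow_add_one₀ (two_ne_zero' ℝ)]
  push_cast
  ring_nf

theorem wavDT_sub_intCast (ψ : ℝ → ℂ) (n : ℕ) (k m : ℤ) (x : ℝ) :
    wavDT ψ n (k - 2 ^ n * m) (x - m) = wavDT ψ n k x := by
  simp only [wavDT, zpow_natCast]
  push_cast
  ring_nf

namespace IsWavelet

variable {ψ : ℝ → ℂ}

theorem exists_hilbertBasis (hψ : IsWavelet ψ) :
    ∃ b : HilbertBasis (ℤ × ℤ) ℂ (Lp ℂ 2 (volume : Measure ℝ)),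
      (∀ p, (b p : ℝ → ℂ) =ᵐ[volume] wavDT ψ p.1 p.2) ∧
      ∀ j, Vspace ψ j = (span ℂ (b '' {p | p.1 < j})).topologicalClosure := by
  obtain ⟨-, Ψ, hΨ, hon, hdense⟩ := hψ
  refine ⟨HilbertBasis.mk hon hdense, by simpa only [HilbertBasis.coe_mk] using hΨ, fun j => ?_⟩
  rw [HilbertBasis.coe_mk, Vspace]
  congr 2
  ext f
  constructor
  · rintro ⟨l, k, hl, hf⟩
    exact ⟨(l, k), hl, Lp.ext ((hΨ (l, k)).trans hf.symm)⟩
  · rintro ⟨p, hp, rfl⟩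
    exact ⟨p.1, p.2, hp, hΨ p⟩

theorem mem_Vspace_iff_comp_two_mul (hψ : IsWavelet ψ) (j : ℤ)
    {f g : Lp ℂ 2 (volume : Measure ℝ)} (hg : (g : ℝ → ℂ) =ᵐ[volume] fun x => f (2 * x)) :
    f ∈ Vspace ψ j ↔ g ∈ Vspace ψ (j + 1) := by
  obtain ⟨b, hb, hV⟩ := hψ.exists_hilbertBasis
  set c : ℂ := (((2 : ℝ) ^ (2⁻¹ : ℝ) : ℝ) : ℂ)
  have hc : c * |(2 : ℝ)⁻¹| ≠ 0 :=
    mul_ne_zero (Complex.ofReal_ne_zero.2 (by positivity)) (by norm_num)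
  have hinner (l k : ℤ) : ⟪b (l + 1, k), g⟫_ℂ = c * |(2 : ℝ)⁻¹| * ⟪b (l, k), f⟫_ℂ := by
    have hdil := (Measure.quasiMeasurePreserving_smul volume (two_ne_zero' ℝ)).ae_eq_comp
      (hb (l, k))
    refine (L2.inner_eq_of_ae_eq_smul_comp_mul (f := b (l, k)) c 2 ?_ hg).trans
      (by rw [Complex.conj_ofReal]; rfl)
    filter_upwards [hb (l + 1, k), hdil] with x hx hdilx
    rw [hx, wavDT_succ, smul_eq_mul]
    exact congrArg (c * ·) hdilx.symm
  rw [hV, hV, b.mem_closure_span_image_iff, b.mem_closure_span_image_iff]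
  constructor
  · rintro hf ⟨l', k⟩ hl'
    obtain ⟨l, rfl⟩ : ∃ l, l' = l + 1 := ⟨l' - 1, by omega⟩
    rw [hinner, hf (l, k) (by simpa using hl'), mul_zero]
  · rintro hg' ⟨l, k⟩ hl
    have h := hg' (l + 1, k) (by simpa using hl)
    rwa [hinner, mul_eq_zero, or_iff_right hc] at h

theorem dense_iUnion_Vspace (hψ : IsWavelet ψ) :
    Dense (⋃ j, (Vspace ψ j : Set (Lp ℂ 2 (volume : Measure ℝ)))) := by
  obtain ⟨b, -, hV⟩ := hψ.exists_hilbertBasis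
  simp_rw [hV]
  exact b.dense_iUnion_closure_span_image (Monotone.directed_le fun _ _ hij _ hp => hp.trans_le hij)
    fun p => ⟨p.1 + 1, lt_add_one p.1⟩

theorem iInf_Vspace_eq_bot (hψ : IsWavelet ψ) : ⨅ j, Vspace ψ j = ⊥ := by
  obtain ⟨b, -, hV⟩ := hψ.exists_hilbertBasis
  simp_rw [hV]
  exact b.iInf_closure_span_image_eq_bot fun p => ⟨p.1, lt_irrefl p.1⟩

theorem transInv_Vspace_zero (hψ : IsWavelet ψ) (m : ℤ) : TransInv (Vspace ψ 0) m := by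
  obtain ⟨b, hb, hV⟩ := hψ.exists_hilbertBasis
  let T : Lp ℂ 2 (volume : Measure ℝ) →ₗᵢ[ℂ] Lp ℂ 2 (volume : Measure ℝ) :=
    Lp.compMeasurePreservingₗᵢ ℂ (fun x : ℝ => x - m) (measurePreserving_sub_right volume _)
  have hT (g : Lp ℂ 2 (volume : Measure ℝ)) : (T g : ℝ → ℂ) =ᵐ[volume] fun x => g (x - m) :=
    Lp.coeFn_compMeasurePreserving g _
  intro f hf
  refine ⟨T f, ?_, hT f⟩
  rw [hV] at hf ⊢
  refine b.map_mem_closure_span_image T (fun p => (p.1, p.2 - 2 ^ p.1.toNat * m))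
    (fun ⟨l, k⟩ hl => ⟨hl, ?_⟩) hf
  obtain ⟨n, rfl⟩ := Int.eq_ofNat_of_zero_le (not_lt.1 hl)
  refine Lp.ext ?_
  filter_upwards [hT (b (n, k - 2 ^ n * m)),
    (measurePreserving_sub_right volume (m : ℝ)).quasiMeasurePreserving.ae_eq_comp
      (hb (n, k - 2 ^ n * m)), hb (n, k)] with x hTx htr hnk
  simp only [Int.toNat_natCast, Function.comp_apply] at htr ⊢
  rw [hTx, htr, hnk]
  exact wavDT_sub_intCast ψ n k m x

end IsWavelet

/-- the spaces `V_j` associated with a wavelet form a GMRA: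
(i) nested; (ii) `f ∈ V_j ↔ f(2·) ∈ V_{j+1}`; (iii) union dense; (iv) intersection
trivial; (v') `V_0` is invariant under integer translations. -/
theorem wavelet_GMRA (ψ : ℝ → ℂ) (hψ : IsWavelet ψ) :
    (∀ j : ℤ, Vspace ψ j ≤ Vspace ψ (j + 1)) ∧
    (∀ j : ℤ, ∀ f g : Lp ℂ 2 (volume : Measure ℝ),
      ((g : ℝ → ℂ) =ᵐ[(volume : Measure ℝ)] fun x => f (2 * x)) →
      (f ∈ Vspace ψ j ↔ g ∈ Vspace ψ (j + 1))) ∧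
    Dense (⋃ j : ℤ, (Vspace ψ j : Set (Lp ℂ 2 (volume : Measure ℝ)))) ∧
    (⨅ j : ℤ, Vspace ψ j) = ⊥ ∧
    (∀ m : ℤ, TransInv (Vspace ψ 0) (m : ℝ)) :=
  ⟨fun j => Vspace_mono ψ (lt_add_one j).le, fun j _ _ => hψ.mem_Vspace_iff_comp_two_mul j,
    hψ.dense_iUnion_Vspace, hψ.iInf_Vspace_eq_bot, hψ.transInv_Vspace_zero⟩
end

section
/- Let n ≥ 3 be an integer and let g_n : ℝ → ℝ be the function equal to 1 on [−b_n,−a_n] ∪ [c_n, a_n/2 + 2^{n−1}π] ∪ [e_n/2 + 2^{n−1}π, d_n], equal to 1/√2 on [a_n/2, e_n/2] ∪ [a_n, e_n] ∪ [a_n/2 + 2^{n−1}π, e_n/2 + 2^{n−1}π], equal to −1/√2 on [a_n + 2^nπ, e_n + 2^nπ], and 0 otherwise. Then Σ_{j∈ℤ} |g_n(2^j ξ)|² = 1 for a.e. ξ ∈ ℝ. -/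
open MeasureTheory Real Set
open scoped Classical

/-- The function `|ψ̂_n|` with signs: equal to `1`, `1/√2`, `−1/√2` on the pieces of
`F_n` and `0` elsewhere. -/
noncomputable def gfun (n : ℕ) : ℝ → ℝ := fun ξ =>
  if ξ ∈ Icc (-(bN n)) (-(aN n)) ∪ Icc (cN n) (aN n / 2 + 2 ^ (n - 1) * π) ∪
      Icc (eN n / 2 + 2 ^ (n - 1) * π) (dN n) then 1
  else if ξ ∈ Icc (aN n / 2) (eN n / 2) ∪ Icc (aN n) (eN n) ∪
      Icc (aN n / 2 + 2 ^ (n - 1) * π) (eN n / 2 + 2 ^ (n - 1) * π) then 1 / Real.sqrt 2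
  else if ξ ∈ Icc (aN n + 2 ^ n * π) (eN n + 2 ^ n * π) then -(1 / Real.sqrt 2)
  else 0


/-!
Measure lengths in units of `π / (2 ^ n - 1)` and put `N = 2 ^ n`: then every endpoint of `g_n` is
a polynomial in `N`. Each piece of the support, dilated by `N`, `N / 2`, `1` or `1 / 2` (the
negative piece by `-N / 2`), lies in the dyadic block `[N² / 4, N² / 2]`. Hence for `w` inside
that block only `j ∈ {-n, 1 - n, 0, 1}` contribute to `∑ⱼ |g_n(2ʲ w)|²` (only `j = 1 - n` to
`∑ⱼ |g_n(-2ʲ w)|²`), and a check on the subintervals cut out by `N² / 2 - N`, `N² / 2 - N / 4`,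
`N² / 2 - 1` shows that the contributions add up to `1`. The sum is invariant under `ξ ↦ 2ξ`, so
this covers every `ξ` outside the countable set of dyadic multiples of these points.
-/

section Dyadic

variable {b : ℝ}

theorem tsum_zpow_mul_zpow_mul {α : Type*} [AddCommMonoid α] [TopologicalSpace α] (f : ℝ → α)
    (hb : b ≠ 0) (k : ℤ) (t : ℝ) : ∑' j : ℤ, f (b ^ j * (b ^ k * t)) = ∑' j : ℤ, f (b ^ j * t) := by
  simp_rw [← mul_assoc, ← zpow_add₀ hb]
  exact (Equiv.addRight k).tsum_eq fun j => f (b ^ j * t)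

theorem eq_of_zpow_mul_mem_Icc {P w : ℝ} {i j : ℤ} (hb : 1 < b) (hP : 0 < P)
    (hw : w ∈ Ioo P (b * P)) (h : b ^ j * w ∈ Icc (b ^ i * P) (b ^ i * (b * P))) : j = i := by
  have hb₀ : 0 < b := one_pos.trans hb
  have hw₀ : 0 < w := hP.trans hw.1
  by_contra hne
  rcases lt_or_gt_of_ne hne with hji | hij
  · have : b ^ j * b ≤ b ^ i := by
      rw [← zpow_add_one₀ hb₀.ne']; exact zpow_le_zpow_right₀ hb.le hji
    have h₁ := mul_le_mul_of_nonneg_right this hw₀.le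
    have h₂ := mul_lt_mul_of_pos_left hw.2 (zpow_pos hb₀ i)
    have h₃ := mul_le_mul_of_nonneg_left h.1 hb₀.le
    linarith
  · have : b ^ i * b ≤ b ^ j := by
      rw [← zpow_add_one₀ hb₀.ne']; exact zpow_le_zpow_right₀ hb.le hij
    have h₁ := mul_le_mul_of_nonneg_right this hw₀.le
    have h₂ := mul_lt_mul_of_pos_left hw.1 (mul_pos (zpow_pos hb₀ i) hb₀)
    linarith [h.2]

theorem exists_abs_zpow_mul_mem_Ico {P t : ℝ} (hb : 1 < b) (hP : 0 < P) (ht : t ≠ 0) :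
    ∃ k : ℤ, |b ^ k * t| ∈ Ico P (b * P) := by
  obtain ⟨m, hm⟩ := exists_mem_Ico_zpow (div_pos (abs_pos.2 ht) hP) hb
  have hm₀ : 0 < b ^ m := zpow_pos (hb.trans' one_pos) m
  refine ⟨-m, ?_⟩
  rw [abs_mul, abs_of_pos (zpow_pos (hb.trans' one_pos) _), zpow_neg, mem_Ico,
    le_inv_mul_iff₀ hm₀, inv_mul_lt_iff₀ hm₀]
  rw [mem_Ico, le_div_iff₀ hP, div_lt_iff₀ hP, zpow_add_one₀ (by positivity)] at hm
  constructor <;> linarith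

theorem Set.Countable.setOf_exists_zpow_mul_mem {F : Set ℝ} (hF : F.Countable) (hb : b ≠ 0) :
    {t : ℝ | ∃ k : ℤ, b ^ k * t ∈ F}.Countable := by
  have : {t : ℝ | ∃ k : ℤ, b ^ k * t ∈ F} = ⋃ k : ℤ, (b ^ k * ·) ⁻¹' F := by ext; simp
  rw [this]
  exact countable_iUnion fun k => hF.preimage (mul_right_injective₀ (zpow_ne_zero k hb))

end Dyadic

/-- `g_n` in units of `π / (2 ^ n - 1)`, with `N = 2 ^ n`: then `a_n, b_n, c_n, d_n, e_n` become
`N / 2, N, N² / 2 - N, N² / 2, N - 2`. -/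
noncomputable def gfunScaled (N t : ℝ) : ℝ :=
  if t ∈ Icc (-N) (-(N / 2)) ∪ Icc (N ^ 2 / 2 - N) (N ^ 2 / 2 - N / 4) ∪
      Icc (N ^ 2 / 2 - 1) (N ^ 2 / 2) then 1
  else if t ∈ Icc (N / 4) (N / 2 - 1) ∪ Icc (N / 2) (N - 2) ∪
      Icc (N ^ 2 / 2 - N / 4) (N ^ 2 / 2 - 1) then 1 / √2
  else if t ∈ Icc (N ^ 2 - N / 2) (N ^ 2 - 2) then -(1 / √2)
  else 0

theorem gfun_eq_gfunScaled {n : ℕ} (hn : 1 ≤ n) (ξ : ℝ) :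
    gfun n ξ = gfunScaled (2 ^ n) (ξ / (π / (2 ^ n - 1))) := by
  have hN : (2 : ℝ) ≤ 2 ^ n := by simpa using pow_le_pow_right₀ one_le_two hn
  set L : ℝ := π / (2 ^ n - 1)
  have hL : 0 < L := div_pos pi_pos (by linarith)
  have hπ : π = (2 ^ n - 1) * L := by
    simp only [L]; field_simp [show (2 : ℝ) ^ n - 1 ≠ 0 by linarith]
  have hpow : (2 : ℝ) ^ (n - 1) = 2 ^ n / 2 := by rw [pow_sub₀ 2 two_ne_zero hn, pow_one]; ring
  have ha : aN n = 2 ^ n / 2 * L := by rw [aN, hpow]; ring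
  have he : eN n = (2 ^ n - 2) * L := by rw [eN]; ring
  have hb : bN n = 2 ^ n * L := by rw [bN, ha]; ring
  have hc : cN n = ((2 ^ n) ^ 2 / 2 - 2 ^ n) * L := by rw [cN, hpow]; ring
  have hd : dN n = (2 ^ n) ^ 2 / 2 * L := by rw [dN, ha]; ring
  have ha₂ : aN n / 2 = 2 ^ n / 4 * L := by rw [ha]; ring
  have he₂ : eN n / 2 = (2 ^ n / 2 - 1) * L := by rw [he]; ring
  have ha₂' : aN n / 2 + 2 ^ (n - 1) * π = ((2 ^ n) ^ 2 / 2 - 2 ^ n / 4) * L := by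
    rw [ha, hpow, hπ]; ring
  have he₂' : eN n / 2 + 2 ^ (n - 1) * π = ((2 ^ n) ^ 2 / 2 - 1) * L := by
    rw [he, hpow, hπ]; ring
  have ha' : aN n + 2 ^ n * π = ((2 ^ n) ^ 2 - 2 ^ n / 2) * L := by rw [ha, hπ]; ring
  have he' : eN n + 2 ^ n * π = ((2 ^ n) ^ 2 - 2) * L := by rw [he, hπ]; ring
  rw [gfun, gfunScaled, ha₂', he₂', ha', he', ha₂, he₂]
  simp only [ha, hb, hc, hd, he, mem_union, mem_Icc, le_div_iff₀ hL, div_le_iff₀ hL, neg_mul]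

section gfunScaled

variable {N x : ℝ}

theorem gfunScaled_eq_one_of_mem_Icc (hx : x ∈ Icc (-N) (-(N / 2))) : gfunScaled N x = 1 :=
  if_pos (Or.inl (Or.inl hx))

theorem gfunScaled_of_mem_Ioo_quarter_half (hN : 4 ≤ N) (hx : x ∈ Ioo (N / 4) (N / 2)) :
    gfunScaled N x = if x ≤ N / 2 - 1 then 1 / √2 else 0 := by
  have : 4 * N ≤ N ^ 2 := by nlinarith
  simp only [gfunScaled, mem_union, mem_Icc, mem_Ioo] at *
  grind

theorem gfunScaled_of_mem_Ioo_half_one (hN : 4 ≤ N) (hx : x ∈ Ioo (N / 2) N) :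
    gfunScaled N x = if x ≤ N - 2 then 1 / √2 else 0 := by
  have : 4 * N ≤ N ^ 2 := by nlinarith
  simp only [gfunScaled, mem_union, mem_Icc, mem_Ioo] at *
  grind

theorem gfunScaled_of_mem_Ioo_sq_quarter_sq_half (hN : 4 ≤ N)
    (hx : x ∈ Ioo (N ^ 2 / 4) (N ^ 2 / 2)) :
    gfunScaled N x = if x < N ^ 2 / 2 - N then 0
      else if x ∈ Ioo (N ^ 2 / 2 - N / 4) (N ^ 2 / 2 - 1) then 1 / √2 else 1 := by
  have : 4 * N ≤ N ^ 2 := by nlinarith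
  simp only [gfunScaled, mem_union, mem_Icc, mem_Ioo] at *
  grind

theorem gfunScaled_of_mem_Ioo_sq_half_sq (hN : 4 ≤ N) (hx : x ∈ Ioo (N ^ 2 / 2) (N ^ 2)) :
    gfunScaled N x = if x ∈ Icc (N ^ 2 - N / 2) (N ^ 2 - 2) then -(1 / √2) else 0 := by
  have : 4 * N ≤ N ^ 2 := by nlinarith
  simp only [gfunScaled, mem_union, mem_Icc, mem_Ioo] at *
  grind

theorem mem_Icc_of_gfunScaled_ne_zero_of_neg (hN : 4 ≤ N) (hx : x < 0)
    (h : gfunScaled N x ≠ 0) : x ∈ Icc (-N) (-(N / 2)) := by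
  have : 4 * N ≤ N ^ 2 := by nlinarith
  simp only [gfunScaled, mem_union, mem_Icc] at *
  grind

theorem mem_of_gfunScaled_ne_zero_of_pos (hN : 4 ≤ N) (hx : 0 < x) (h : gfunScaled N x ≠ 0) :
    x ∈ Icc (N / 4) (N / 2) ∪ Icc (N / 2) N ∪ Icc (N ^ 2 / 4) (N ^ 2 / 2) ∪
      Icc (N ^ 2 / 2) (N ^ 2) := by
  have : 4 * N ≤ N ^ 2 := by nlinarith
  simp only [gfunScaled, mem_union, mem_Icc] at *
  grind

end gfunScaled

section DyadicSum

variable {n : ℕ}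

theorem four_le_two_pow (hn : 2 ≤ n) : (4 : ℝ) ≤ 2 ^ n := by
  calc (4 : ℝ) = 2 ^ 2 := by norm_num
    _ ≤ 2 ^ n := pow_le_pow_right₀ one_le_two hn

theorem exists_mem_Icc_of_gfunScaled_ne_zero (hn : 2 ≤ n) {x : ℝ} (hx : 0 < x)
    (h : gfunScaled (2 ^ n) x ≠ 0) :
    ∃ i ∈ ({-(n : ℤ), 1 - (n : ℤ), 0, 1} : Finset ℤ),
      x ∈ Icc (2 ^ i * ((2 ^ n) ^ 2 / 4)) (2 ^ i * (2 * ((2 ^ n) ^ 2 / 4))) := by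
  have hN : (2 : ℝ) ^ n ≠ 0 := by positivity
  rcases mem_of_gfunScaled_ne_zero_of_pos (four_le_two_pow hn) hx h with ((hx | hx) | hx) | hx
  · refine ⟨-n, by simp, ?_⟩
    convert hx using 2 <;> (rw [zpow_neg, zpow_natCast]; field_simp <;> norm_num)
  · refine ⟨1 - n, by simp, ?_⟩
    convert hx using 2 <;> (rw [zpow_sub₀ two_ne_zero, zpow_natCast]; field_simp; norm_num)
  · exact ⟨0, by simp, by convert hx using 2 <;> ring⟩
  · exact ⟨1, by simp, by convert hx using 2 <;> ring⟩

theorem gfunScaled_zpow_mul_eq_zero (hn : 2 ≤ n) {w : ℝ}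
    (hw : w ∈ Ioo ((2 ^ n) ^ 2 / 4) (2 * ((2 ^ n) ^ 2 / 4))) {j : ℤ}
    (hj : j ∉ ({-(n : ℤ), 1 - (n : ℤ), 0, 1} : Finset ℤ)) :
    gfunScaled (2 ^ n) (2 ^ j * w) = 0 := by
  by_contra h
  have hP : (0 : ℝ) < (2 ^ n) ^ 2 / 4 := by positivity
  obtain ⟨i, hi, hmem⟩ :=
    exists_mem_Icc_of_gfunScaled_ne_zero hn (mul_pos (by positivity) (hP.trans hw.1)) h
  exact hj (eq_of_zpow_mul_mem_Icc one_lt_two hP hw hmem ▸ hi)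

theorem gfunScaled_zpow_mul_neg_eq_zero (hn : 2 ≤ n) {w : ℝ}
    (hw : w ∈ Ioo ((2 ^ n) ^ 2 / 4) (2 * ((2 ^ n) ^ 2 / 4))) {j : ℤ} (hj : j ≠ 1 - n) :
    gfunScaled (2 ^ n) (2 ^ j * -w) = 0 := by
  by_contra h
  have hP : (0 : ℝ) < (2 ^ n) ^ 2 / 4 := by positivity
  have hneg : 2 ^ j * -w < 0 := mul_neg_of_pos_of_neg (by positivity) (by linarith [hw.1])
  have hmem := mem_Icc_of_gfunScaled_ne_zero_of_neg (four_le_two_pow hn) hneg h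
  refine hj (eq_of_zpow_mul_mem_Icc one_lt_two hP hw ?_)
  rw [zpow_sub₀ two_ne_zero, zpow_natCast, mem_Icc]
  have hN : (0 : ℝ) < 2 ^ n := by positivity
  field_simp
  constructor <;> linarith [hmem.1, hmem.2]

theorem tsum_sq_gfunScaled_zpow_mul_of_pos (hn : 2 ≤ n) {w : ℝ}
    (hw : w ∈ Ioo ((2 ^ n) ^ 2 / 4) (2 * ((2 ^ n) ^ 2 / 4)))
    (h₁ : w ≠ (2 ^ n) ^ 2 / 2 - 2 ^ n) (h₂ : w ≠ (2 ^ n) ^ 2 / 2 - 2 ^ n / 4)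
    (h₃ : w ≠ (2 ^ n) ^ 2 / 2 - 1) :
    ∑' j : ℤ, |gfunScaled (2 ^ n) (2 ^ j * w)| ^ 2 = 1 := by
  have hN := four_le_two_pow hn
  set N : ℝ := 2 ^ n
  have hN₀ : 0 < N := by positivity
  rw [tsum_eq_sum (s := {-(n : ℤ), 1 - (n : ℤ), 0, 1}) fun j hj => by
      rw [gfunScaled_zpow_mul_eq_zero hn hw hj, abs_zero, zero_pow two_ne_zero],
    Finset.sum_insert (by simp; omega), Finset.sum_insert (by simp; omega),
    Finset.sum_pair zero_ne_one]
  have e₁ : (2 : ℝ) ^ (-(n : ℤ)) * w = w / N := by rw [zpow_neg, zpow_natCast, inv_mul_eq_div]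
  have e₂ : (2 : ℝ) ^ (1 - (n : ℤ)) * w = 2 * w / N := by
    rw [zpow_sub₀ two_ne_zero, zpow_natCast, zpow_one, div_mul_eq_mul_div]
  obtain ⟨hlo, hhi⟩ := hw
  rw [e₁, e₂, zpow_zero, one_mul, zpow_one,
    gfunScaled_of_mem_Ioo_quarter_half hN
      ⟨by rw [lt_div_iff₀ hN₀]; nlinarith, by rw [div_lt_iff₀ hN₀]; nlinarith⟩,
    gfunScaled_of_mem_Ioo_half_one hN
      ⟨by rw [lt_div_iff₀ hN₀]; nlinarith, by rw [div_lt_iff₀ hN₀]; nlinarith⟩,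
    gfunScaled_of_mem_Ioo_sq_quarter_sq_half hN ⟨hlo, by linarith⟩,
    gfunScaled_of_mem_Ioo_sq_half_sq hN ⟨by linarith, by linarith⟩]
  have c₁ : w / N ≤ N / 2 - 1 ↔ w ≤ N ^ 2 / 2 - N := by
    rw [div_le_iff₀ hN₀]; constructor <;> intro h <;> nlinarith
  have c₂ : 2 * w / N ≤ N - 2 ↔ w ≤ N ^ 2 / 2 - N := by
    rw [div_le_iff₀ hN₀]; constructor <;> intro h <;> nlinarith
  simp only [c₁, c₂, mem_Icc, mem_Ioo]
  clear_value N
  split_ifs <;> simp only [sq_abs, neg_sq, div_pow, one_pow, sq_sqrt zero_le_two] <;> grind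

theorem tsum_sq_gfunScaled_zpow_mul_neg (hn : 2 ≤ n) {w : ℝ}
    (hw : w ∈ Ioo ((2 ^ n) ^ 2 / 4) (2 * ((2 ^ n) ^ 2 / 4))) :
    ∑' j : ℤ, |gfunScaled (2 ^ n) (2 ^ j * -w)| ^ 2 = 1 := by
  rw [tsum_eq_single (1 - (n : ℤ)) fun j hj => by
    rw [gfunScaled_zpow_mul_neg_eq_zero hn hw hj, abs_zero, zero_pow two_ne_zero]]
  have hN₀ : (0 : ℝ) < 2 ^ n := by positivity
  have hx : (2 : ℝ) ^ (1 - (n : ℤ)) * -w = -(2 * w / 2 ^ n) := by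
    rw [zpow_sub₀ two_ne_zero, zpow_natCast, zpow_one]; ring
  rw [hx, gfunScaled_eq_one_of_mem_Icc, abs_one, one_pow]
  obtain ⟨hlo, hhi⟩ := hw
  constructor
  · rw [neg_le_neg_iff, div_le_iff₀ hN₀]; nlinarith
  · rw [neg_le_neg_iff, le_div_iff₀ hN₀]; nlinarith

theorem ae_tsum_sq_gfunScaled_eq_one (hn : 2 ≤ n) :
    ∀ᵐ t : ℝ, ∑' j : ℤ, |gfunScaled (2 ^ n) (2 ^ j * t)| ^ 2 = 1 := by
  set N : ℝ := 2 ^ n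
  set P : ℝ := N ^ 2 / 4
  have hP : 0 < P := by positivity
  set F : Set ℝ := {0, P, -P, N ^ 2 / 2 - N, N ^ 2 / 2 - N / 4, N ^ 2 / 2 - 1}
  have hF : {t : ℝ | ∃ k : ℤ, 2 ^ k * t ∈ F}.Countable :=
    (toFinite F).countable.setOf_exists_zpow_mul_mem two_ne_zero
  filter_upwards [measure_eq_zero_iff_ae_notMem.mp (hF.measure_zero volume)] with t ht
  simp only [not_exists] at ht
  obtain ⟨k, hk⟩ := exists_abs_zpow_mul_mem_Ico one_lt_two hP fun h : t = 0 => ht 0 (by simp [F, h])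
  set s := 2 ^ k * t
  have hs : s ∉ F := ht k
  simp only [F, mem_insert_iff, mem_singleton_iff, not_or] at hs
  obtain ⟨hs₀, hsP, hsP', h₁, h₂, h₃⟩ := hs
  have hs' : |s| ∈ Ioo P (2 * P) := by
    refine ⟨lt_of_le_of_ne hk.1 fun h => ?_, hk.2⟩
    rcases abs_choice s with hs | hs <;> rw [hs] at h
    · exact hsP h.symm
    · exact hsP' (by linarith)
  have htk : t = 2 ^ (-k) * s := by
    rw [zpow_neg, inv_mul_eq_div, eq_div_iff (zpow_ne_zero k two_ne_zero), mul_comm]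
  rw [htk, tsum_zpow_mul_zpow_mul (fun x => |gfunScaled N x| ^ 2) two_ne_zero]
  rcases lt_or_gt_of_ne hs₀ with hneg | hpos
  · rw [← neg_neg s, ← abs_of_neg hneg]
    exact tsum_sq_gfunScaled_zpow_mul_neg hn hs'
  · rw [abs_of_pos hpos] at hs'
    exact tsum_sq_gfunScaled_zpow_mul_of_pos hn hs' h₁ h₂ h₃

end DyadicSum

/-- `Σ_{j∈ℤ} |g_n(2^j ξ)|² = 1` for a.e. `ξ ∈ ℝ`. -/
theorem gfun_squares_sum_one (n : ℕ) (hn : 3 ≤ n) :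
    ∀ᵐ ξ ∂(volume : Measure ℝ), ∑' j : ℤ, |gfun n ((2 : ℝ) ^ j * ξ)| ^ 2 = 1 := by
  have hL : π / (2 ^ n - 1) ≠ 0 :=
    div_ne_zero pi_ne_zero (by linarith [four_le_two_pow (n := n) (by omega)])
  filter_upwards [(Measure.quasiMeasurePreserving_smul volume (inv_ne_zero hL)).ae
    (ae_tsum_sq_gfunScaled_eq_one (by omega : 2 ≤ n))] with ξ hξ
  simp_rw [gfun_eq_gfunScaled (by omega : 1 ≤ n), mul_div_assoc, div_eq_inv_mul ξ]
  exact hξ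
end

section
/- Let n ≥ 3 be an integer and let g_n : ℝ → ℝ be the function equal to 1 on [−b_n,−a_n] ∪ [c_n, a_n/2 + 2^{n−1}π] ∪ [e_n/2 + 2^{n−1}π, d_n], equal to 1/√2 on [a_n/2, e_n/2] ∪ [a_n, e_n] ∪ [a_n/2 + 2^{n−1}π, e_n/2 + 2^{n−1}π], equal to −1/√2 on [a_n + 2^nπ, e_n + 2^nπ], and 0 otherwise. Then for every odd integer q, Σ_{j≥0} g_n(2^j ξ) · g_n(2^j(ξ + 2qπ)) = 0 for a.e. ξ ∈ ℝ. -/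
open MeasureTheory Real Set
open scoped Classical

/-! In the coordinate `t = ξ (2^n - 1) / π`, with `m = 2^(n-2)`, all breakpoints of `g_n` are
integers and the shift by `2^(j+1) q π` becomes a shift by `c (4m - 1)` with `c = 2^(j+1) q` even.
Off the integers, every point of the support of `g_n` is `b (4m - 1) + o` with `b ∈ {0, 2m, 4m}`
and the offset `o` in a window inside `(-4m, 4m - 2)`. Offsets differ by less than `2 (4m - 1)`,
so if `g(t) g(t + c (4m - 1)) ≠ 0` then `c` is the difference of the two bases and both points
share their offset; comparing the windows of the different bases leaves only `c = ±2m, ±4m`.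
Hence only `q = ±1` contributes, only at `j = n - 2` and `j = n - 1`, where the two terms are
`1/2` and `-1/2` on the same set. The `ξ` for which some `2^j t` is an integer form a null set. -/

/-- The profile of `gfun (k + 2)` in the coordinate `t = ξ (2^(k+2) - 1) / π`, where `m = 2^k`;
in this coordinate all breakpoints are integers. -/
noncomputable def gScaled (m : ℤ) (t : ℝ) : ℝ :=
  if t ∈ Icc ((-(4 * m) : ℤ) : ℝ) ((-(2 * m) : ℤ) : ℝ) ∪
      Icc ((8 * m ^ 2 - 4 * m : ℤ) : ℝ) ((8 * m ^ 2 - m : ℤ) : ℝ) ∪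
      Icc ((8 * m ^ 2 - 1 : ℤ) : ℝ) ((8 * m ^ 2 : ℤ) : ℝ) then 1
  else if t ∈ Icc (m : ℝ) ((2 * m - 1 : ℤ) : ℝ) ∪ Icc ((2 * m : ℤ) : ℝ) ((4 * m - 2 : ℤ) : ℝ) ∪
      Icc ((8 * m ^ 2 - m : ℤ) : ℝ) ((8 * m ^ 2 - 1 : ℤ) : ℝ) then 1 / √2
  else if t ∈ Icc ((16 * m ^ 2 - 2 * m : ℤ) : ℝ) ((16 * m ^ 2 - 2 : ℤ) : ℝ) then -(1 / √2)
  else 0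

lemma gfun_eq_gScaled (k : ℕ) (x : ℝ) :
    gfun (k + 2) x = gScaled (2 ^ k) (x * (2 ^ (k + 2) - 1) / π) := by
  have hK : (0 : ℝ) < 2 ^ (k + 2) - 1 := by
    have : (1 : ℝ) ≤ 2 ^ k := one_le_pow₀ (by norm_num)
    rw [pow_add]; linarith
  set φ : ℝ → ℝ := fun y => y * (2 ^ (k + 2) - 1) / π
  have hφ : ∀ a b : ℝ, x ∈ Icc a b ↔ φ a ≤ φ x ∧ φ x ≤ φ b := fun a b => by
    simp only [mem_Icc, φ, div_le_div_iff_of_pos_right pi_pos, mul_le_mul_iff_of_pos_right hK]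
  simp only [gfun, gScaled, hφ, mem_union, mem_Icc]
  -- `φ` sends each breakpoint of `gfun (k + 2)` to the matching one of `gScaled (2 ^ k)`
  congr! 8 <;> simp only [φ, aN, bN, cN, dN, eN, show k + 2 - 1 = k + 1 from rfl] <;>
    push_cast <;> field_simp <;> ring

lemma mem_Ioo_of_mem_Icc_of_forall_ne {t : ℝ} (ht : ∀ l : ℤ, t ≠ l) {a b : ℤ}
    (h : t ∈ Icc (a : ℝ) b) : t ∈ Ioo (a : ℝ) b :=
  ⟨h.1.lt_of_ne (ht a).symm, h.2.lt_of_ne (ht b)⟩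

lemma eq_zero_of_even_of_mul_mem_Ioo {K : ℝ} (hK : 0 < K) {d : ℤ} (hd : Even d)
    (h : (d : ℝ) * K ∈ Ioo (-(2 * K)) (2 * K)) : d = 0 := by
  have h₁ : (-2 : ℝ) < d := by nlinarith [h.1]
  have h₂ : (d : ℝ) < 2 := by nlinarith [h.2]
  obtain ⟨r, rfl⟩ := hd
  have : (-2 : ℤ) < r + r := by exact_mod_cast h₁
  have : r + r < (2 : ℤ) := by exact_mod_cast h₂
  omega

lemma Int.eq_one_and_eq_of_two_pow_mul_eq_two_pow {q : ℤ} (hq : Odd q) {a b : ℕ}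
    (h : 2 ^ a * q = 2 ^ b) : q = 1 ∧ a = b := by
  have hunit : IsUnit q :=
    ((Int.isCoprime_two_right.2 hq).pow_right (n := b)).isUnit_of_dvd' dvd_rfl
      ⟨2 ^ a, by rw [← h, mul_comm]⟩
  rcases Int.isUnit_iff.1 hunit with rfl | rfl
  · exact ⟨rfl, Nat.pow_right_injective le_rfl (by exact_mod_cast (mul_one (2 ^ a : ℤ)) ▸ h)⟩
  · have : (0 : ℤ) < 2 ^ a := by positivity
    have : (0 : ℤ) < 2 ^ b := by positivity
    linarith

lemma ae_forall_two_pow_mul_ne_intCast {a : ℝ} (ha : a ≠ 0) :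
    ∀ᵐ x : ℝ, ∀ (j : ℕ) (l : ℤ), 2 ^ j * (x * a) ≠ l := by
  rw [ae_iff]
  refine measure_mono_null (fun x hx => ?_)
    ((countable_range fun p : ℕ × ℤ => p.2 / (2 ^ p.1 * a)).measure_zero volume)
  obtain ⟨j, l, hx⟩ : ∃ (j : ℕ) (l : ℤ), 2 ^ j * (x * a) = l := by simpa using hx
  exact ⟨(j, l), by field_simp; linarith⟩

section

variable {m : ℤ}

def IsSupportOffset (m b : ℤ) (o : ℝ) : Prop :=
  (b = 0 ∧ o ∈ Ioo (-(4 * m) : ℝ) (-(2 * m)) ∪ Ioo (m : ℝ) (2 * m - 1) ∪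
      Ioo (2 * m : ℝ) (4 * m - 2)) ∨
    (b = 2 * m ∧ o ∈ Ioo (-(2 * m) : ℝ) (2 * m)) ∨ (b = 4 * m ∧ o ∈ Ioo (2 * m : ℝ) (4 * m - 2))

lemma IsSupportOffset.even_and_mem_Ioo (hm : 0 < m) {b : ℤ} {o : ℝ}
    (h : IsSupportOffset m b o) : Even b ∧ o ∈ Ioo (-(4 * m) : ℝ) (4 * m - 2) := by
  have hm' : (1 : ℝ) ≤ m := by exact_mod_cast hm
  rcases h with ⟨rfl, ((⟨h₁, h₂⟩ | ⟨h₁, h₂⟩) | ⟨h₁, h₂⟩)⟩ | ⟨rfl, h₁, h₂⟩ | ⟨rfl, h₁, h₂⟩ <;>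
    exact ⟨by rw [Int.even_iff]; omega, by linarith, by linarith⟩

lemma exists_isSupportOffset_of_gScaled_ne_zero (hm : 0 < m) {t : ℝ} (ht : ∀ l : ℤ, t ≠ l)
    (h : gScaled m t ≠ 0) :
    ∃ b : ℤ, ∃ o : ℝ, t = b * (4 * m - 1) + o ∧ IsSupportOffset m b o := by
  have hm' : (1 : ℝ) ≤ m := by exact_mod_cast hm
  unfold gScaled at h
  split_ifs at h with h₁ h₂ h₃
  · rcases h₁ with (h₁ | h₁) | h₁ <;> obtain ⟨l, u⟩ := mem_Ioo_of_mem_Icc_of_forall_ne ht h₁ <;>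
      push_cast at l u
    · exact ⟨0, t, by simp, Or.inl ⟨rfl, Or.inl (Or.inl ⟨l, u⟩)⟩⟩
    all_goals
      refine ⟨2 * m, t - 2 * m * (4 * m - 1), by push_cast; ring,
        Or.inr (Or.inl ⟨rfl, ?_, ?_⟩)⟩ <;> linarith
  · rcases h₂ with (h₂ | h₂) | h₂ <;> obtain ⟨l, u⟩ := mem_Ioo_of_mem_Icc_of_forall_ne ht h₂ <;>
      push_cast at l u
    · exact ⟨0, t, by simp, Or.inl ⟨rfl, Or.inl (Or.inr ⟨l, u⟩)⟩⟩
    · exact ⟨0, t, by simp, Or.inl ⟨rfl, Or.inr ⟨l, u⟩⟩⟩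
    · refine ⟨2 * m, t - 2 * m * (4 * m - 1), by push_cast; ring,
        Or.inr (Or.inl ⟨rfl, ?_, ?_⟩)⟩ <;> linarith
  · obtain ⟨l, u⟩ := mem_Ioo_of_mem_Icc_of_forall_ne ht h₃
    push_cast at l u
    refine ⟨4 * m, t - 4 * m * (4 * m - 1), by push_cast; ring,
      Or.inr (Or.inr ⟨rfl, ?_, ?_⟩)⟩ <;> linarith
  · exact absurd rfl h

noncomputable def gScaledShiftProd (m c : ℤ) (t : ℝ) : ℝ :=
  gScaled m t * gScaled m (t + c * (4 * m - 1))

lemma gScaledShiftProd_comm (m c : ℤ) (t : ℝ) :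
    gScaledShiftProd m c t = gScaledShiftProd m (-c) (t + c * (4 * m - 1)) := by
  simp only [gScaledShiftProd, Int.cast_neg, neg_mul, add_neg_cancel_right, mul_comm]

lemma eq_and_mem_of_gScaledShiftProd_ne_zero (hm : 0 < m) {c : ℤ} (hc : Even c) (hc0 : c ≠ 0)
    {t : ℝ} (ht : ∀ l : ℤ, t ≠ l) (h : gScaledShiftProd m c t ≠ 0) :
    (c = 2 * m ∧ t ∈ Ioo (m : ℝ) (2 * m - 1)) ∨ (c = 4 * m ∧ t ∈ Ioo (2 * m : ℝ) (4 * m - 2)) ∨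
      c = -(2 * m) ∨ c = -(4 * m) := by
  have hm' : (1 : ℝ) ≤ m := by exact_mod_cast hm
  have ht' : ∀ l : ℤ, t + c * (4 * m - 1) ≠ l := fun l e =>
    ht (l - c * (4 * m - 1)) (by push_cast; linarith)
  obtain ⟨b, o, rfl, hb⟩ :=
    exists_isSupportOffset_of_gScaled_ne_zero hm ht (left_ne_zero_of_mul h)
  obtain ⟨b', o', e, hb'⟩ :=
    exists_isSupportOffset_of_gScaled_ne_zero hm ht' (right_ne_zero_of_mul h)
  obtain ⟨hbe, ho₁, ho₂⟩ := hb.even_and_mem_Ioo hm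
  obtain ⟨hbe', ho₁', ho₂'⟩ := hb'.even_and_mem_Ioo hm
  -- the offsets differ by less than `2 (4m - 1)`, so the shift is exactly the change of base
  have hcb : c - (b' - b) = 0 := by
    refine eq_zero_of_even_of_mul_mem_Ioo (K := 4 * m - 1) (by linarith) (hc.sub (hbe'.sub hbe)) ?_
    push_cast
    constructor <;> linarith
  obtain rfl : c = b' - b := by omega
  obtain rfl : o' = o := by push_cast at e; linarith
  rcases hb with ⟨rfl, ho⟩ | ⟨rfl, ho⟩ | ⟨rfl, ho⟩ <;>
    rcases hb' with ⟨rfl, ho'⟩ | ⟨rfl, ho'⟩ | ⟨rfl, ho'⟩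
  · exact absurd (sub_self _) hc0
  · refine Or.inl ⟨by ring, ?_⟩
    rw [Int.cast_zero, zero_mul, zero_add]
    rcases ho with (ho | ho) | ho
    · exact (lt_asymm ho'.1 ho.2).elim
    · exact ho
    · exact (lt_asymm ho.1 ho'.2).elim
  · exact Or.inr (Or.inl ⟨by ring, by simpa using ho'⟩)
  · exact Or.inr (Or.inr (Or.inl (by ring)))
  · exact absurd (sub_self _) hc0
  · exact (lt_asymm ho'.1 ho.2).elim
  · exact Or.inr (Or.inr (Or.inr (by ring)))
  · exact (lt_asymm ho.1 ho'.2).elim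
  · exact absurd (sub_self _) hc0

lemma gScaledShiftProd_of_mem_Ioo (hm : 0 < m) {s : ℝ} (hs : s ∈ Ioo (m : ℝ) (2 * m - 1)) :
    gScaledShiftProd m (2 * m) s = 1 / 2 ∧ gScaledShiftProd m (4 * m) (2 * s) = -(1 / 2) := by
  have hm' : (1 : ℝ) ≤ m := by exact_mod_cast hm
  obtain ⟨h₁, h₂⟩ := hs
  have v₁ : gScaled m s = 1 / √2 := by
    unfold gScaled; push_cast; simp only [mem_union, mem_Icc]
    rw [if_neg (by rintro ((⟨_, _⟩ | ⟨_, _⟩) | ⟨_, _⟩) <;> nlinarith),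
      if_pos (Or.inl (Or.inl ⟨h₁.le, h₂.le⟩))]
  have v₂ : gScaled m (s + (2 * m : ℤ) * (4 * m - 1)) = 1 / √2 := by
    unfold gScaled; push_cast; simp only [mem_union, mem_Icc]
    rw [if_neg (by rintro ((⟨_, _⟩ | ⟨_, _⟩) | ⟨_, _⟩) <;> nlinarith),
      if_pos (Or.inr ⟨by nlinarith, by nlinarith⟩)]
  have v₃ : gScaled m (2 * s) = 1 / √2 := by
    unfold gScaled; push_cast; simp only [mem_union, mem_Icc]
    rw [if_neg (by rintro ((⟨_, _⟩ | ⟨_, _⟩) | ⟨_, _⟩) <;> nlinarith),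
      if_pos (Or.inl (Or.inr ⟨by linarith, by linarith⟩))]
  have v₄ : gScaled m (2 * s + (4 * m : ℤ) * (4 * m - 1)) = -(1 / √2) := by
    unfold gScaled; push_cast; simp only [mem_union, mem_Icc]
    rw [if_neg (by rintro ((⟨_, _⟩ | ⟨_, _⟩) | ⟨_, _⟩) <;> nlinarith),
      if_neg (by rintro ((⟨_, _⟩ | ⟨_, _⟩) | ⟨_, _⟩) <;> nlinarith),
      if_pos ⟨by nlinarith, by nlinarith⟩]
  have half : 1 / √2 * (1 / √2) = (1 / 2 : ℝ) := by
    rw [div_mul_div_comm, one_mul, mul_self_sqrt zero_le_two]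
  simp only [gScaledShiftProd, v₁, v₂, v₃, v₄, half, mul_neg, and_self]

lemma gScaledShiftProd_two_mul_add (hm : 0 < m) {s : ℝ} (hs : ∀ l : ℤ, s ≠ l)
    (hs₂ : ∀ l : ℤ, 2 * s ≠ l) :
    gScaledShiftProd m (2 * m) s + gScaledShiftProd m (4 * m) (2 * s) = 0 := by
  by_cases hI : s ∈ Ioo (m : ℝ) (2 * m - 1)
  · obtain ⟨v₁, v₂⟩ := gScaledShiftProd_of_mem_Ioo hm hI
    rw [v₁, v₂, add_neg_cancel]
  have z₁ : gScaledShiftProd m (2 * m) s = 0 := by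
    by_contra h
    rcases eq_and_mem_of_gScaledShiftProd_ne_zero hm (even_two_mul m) (by omega) hs h with
      ⟨-, h⟩ | ⟨h, -⟩ | h | h
    · exact hI h
    all_goals omega
  have z₂ : gScaledShiftProd m (4 * m) (2 * s) = 0 := by
    by_contra h
    rcases eq_and_mem_of_gScaledShiftProd_ne_zero hm ⟨2 * m, by ring⟩ (by omega) hs₂ h with
      ⟨h, -⟩ | ⟨-, h₁, h₂⟩ | h | h
    · omega
    · exact hI ⟨by linarith, by linarith⟩
    all_goals omega
  rw [z₁, z₂, add_zero]

end

lemma tsum_gScaledShiftProd_eq_zero (k : ℕ) {q : ℤ} (hq : Odd q) {σ : ℝ}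
    (hσ : ∀ (j : ℕ) (l : ℤ), 2 ^ j * σ ≠ l) :
    ∑' j : ℕ, gScaledShiftProd (2 ^ k) (2 ^ (j + 1) * q) (2 ^ j * σ) = 0 := by
  set f : ℕ → ℝ := fun j => gScaledShiftProd (2 ^ k) (2 ^ (j + 1) * q) (2 ^ j * σ)
  have hm : (0 : ℤ) < 2 ^ k := by positivity
  have hsupp : ∀ j, f j ≠ 0 → (q = 1 ∨ q = -1) ∧ (j = k ∨ j = k + 1) := by
    intro j hj
    have hc : Even (2 ^ (j + 1) * q) := (Int.even_pow.2 ⟨even_two, j.succ_ne_zero⟩).mul_right q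
    have hc0 : 2 ^ (j + 1) * q ≠ 0 := mul_ne_zero (by positivity) (by rintro rfl; simp at hq)
    rcases eq_and_mem_of_gScaledShiftProd_ne_zero hm hc hc0 (hσ j) hj with
      ⟨h, -⟩ | ⟨h, -⟩ | h | h
    · obtain ⟨rfl, e⟩ := Int.eq_one_and_eq_of_two_pow_mul_eq_two_pow hq (b := k + 1)
        (by rw [h]; ring)
      exact ⟨Or.inl rfl, Or.inl (by omega)⟩
    · obtain ⟨rfl, e⟩ := Int.eq_one_and_eq_of_two_pow_mul_eq_two_pow hq (b := k + 2)
        (by rw [h]; ring)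
      exact ⟨Or.inl rfl, Or.inr (by omega)⟩
    · obtain ⟨hq', e⟩ := Int.eq_one_and_eq_of_two_pow_mul_eq_two_pow hq.neg (b := k + 1)
        (by rw [mul_neg, h]; ring)
      exact ⟨Or.inr (by omega), Or.inl (by omega)⟩
    · obtain ⟨hq', e⟩ := Int.eq_one_and_eq_of_two_pow_mul_eq_two_pow hq.neg (b := k + 2)
        (by rw [mul_neg, h]; ring)
      exact ⟨Or.inr (by omega), Or.inr (by omega)⟩
  by_cases hq₁ : q = 1 ∨ q = -1
  swap
  · have : ∀ j, f j = 0 := fun j => by_contra fun h => hq₁ (hsupp j h).1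
    rw [funext this, tsum_zero]
  rw [tsum_eq_sum (s := {k, k + 1}) fun j hj => by_contra fun h => hj (by simp [(hsupp j h).2]),
    Finset.sum_pair (by omega)]
  rcases hq₁ with rfl | rfl
  · have := gScaledShiftProd_two_mul_add hm (hσ k) (s := 2 ^ k * σ)
      fun l => by rw [← mul_assoc, ← pow_succ']; exact hσ (k + 1) l
    convert this using 3 <;> ring
  · -- reflect both products onto the case `q = 1`, at `s = 2^k σ - 2^(k+1) (4 * 2^k - 1)`
    rw [gScaledShiftProd_comm _ (2 ^ (k + 1) * -1), gScaledShiftProd_comm _ (2 ^ (k + 1 + 1) * -1)]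
    have := gScaledShiftProd_two_mul_add hm (s := 2 ^ k * σ - 2 ^ (k + 1) * (4 * 2 ^ k - 1))
      (fun l e => hσ k (l + 2 ^ (k + 1) * (4 * 2 ^ k - 1)) (by push_cast; linear_combination e))
      (fun l e => hσ (k + 1) (l + 2 ^ (k + 2) * (4 * 2 ^ k - 1))
        (by push_cast; linear_combination e))
    convert this using 3 <;> push_cast <;> ring

/-- for every odd integer `q`,
`Σ_{j≥0} g_n(2^j ξ) g_n(2^j(ξ + 2qπ)) = 0` for a.e. `ξ ∈ ℝ`. -/
theorem gfun_tq_eq_zero (n : ℕ) (hn : 3 ≤ n) (q : ℤ) (hq : Odd q) :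
    ∀ᵐ ξ ∂(volume : Measure ℝ),
      ∑' j : ℕ, gfun n ((2 : ℝ) ^ j * ξ) * gfun n ((2 : ℝ) ^ j * (ξ + 2 * (q : ℝ) * π)) = 0 := by
  obtain ⟨k, rfl⟩ : ∃ k, n = k + 2 := ⟨n - 2, by omega⟩
  have hK : (2 ^ (k + 2) - 1) / π ≠ 0 := by
    have : (1 : ℝ) < 2 ^ (k + 2) := one_lt_pow₀ (by norm_num) (by omega)
    exact div_ne_zero (by linarith) pi_ne_zero
  filter_upwards [ae_forall_two_pow_mul_ne_intCast hK] with ξ hξ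
  rw [← tsum_gScaledShiftProd_eq_zero k hq hξ]
  refine tsum_congr fun j => ?_
  rw [gfun_eq_gScaled, gfun_eq_gScaled, gScaledShiftProd]
  congr 2 <;> push_cast <;> field_simp; ring
end

section
/- For each integer n ≥ 3, 𝓔(ψ_n) = {0, 2^{n−2}, −2^{n−2}, 2^{n−1}, −2^{n−1}}; consequently every element of 𝓔(ψ_n) is divisible by 2^{n−2} and 2^{n−2} ∈ 𝓔(ψ_n) is not divisible by 2^{n−1}. -/
open MeasureTheory Real Set
open scoped Classical

/-- The Fourier transform `ψ̂_n` of the wavelet `ψ_n`: equal to `1`, `1/√2`, `−1/√2`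
on the pieces of `F_n` and `0` elsewhere. -/
noncomputable def psihat (n : ℕ) : ℝ → ℂ := fun ξ => ((gfun n ξ : ℝ) : ℂ)

/-!
Put `M = 2^(n-2)` and `u = π / (2^n - 1)`, so that `π = (4M - 1)u` and all breakpoints of `ψ̂_n`
are integer multiples of `u`. In these units the support of `ψ̂_n` lies in the three blocks
`[-4M, 4M-2]`, `[8M²-4M, 8M²]`, `[16M²-2M, 16M²-2]`, and a shift by `2kπ` is a shift by
`k(8M - 2)`. Two blocks overlap with positive measure after such a shift only if `k(8M - 2)` lies
strictly between the neighbouring multiples `(j ± 1)(8M - 2)` of one of `j = 0, ±M, ±2M`, which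
forces `k = j` (the middle and last blocks would need `M < |k| < M + 1`). Conversely, since `M ≥ 2`,
explicit intervals of positive length realise the shifts `k = 0, M, 2M`, and `𝓔` is symmetric under
`k ↦ -k`.
-/

lemma exists_sub_lt_lt_sub_of_volume_pos {ι κ : Type*} [Countable ι] [Countable κ]
    {A B : Set ℝ} {a b : ι → ℝ} {c d : κ → ℝ} (hA : A ⊆ ⋃ i, Icc (a i) (b i))
    (hB : B ⊆ ⋃ j, Icc (c j) (d j)) {s : ℝ} (h : 0 < volume {ξ | ξ ∈ A ∧ ξ - s ∈ B}) :
    ∃ i j, a i - d j < s ∧ s < b i - c j := by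
  by_contra! H
  refine h.ne' (measure_mono_null ?_ (measure_iUnion_null fun i => measure_iUnion_null fun j =>
    (?_ : volume (Icc (a i) (b i) ∩ Icc (c j + s) (d j + s)) = 0)))
  · rintro ξ ⟨hξA, hξB⟩
    obtain ⟨i, hi⟩ := mem_iUnion.1 (hA hξA)
    obtain ⟨j, hj⟩ := mem_iUnion.1 (hB hξB)
    exact mem_iUnion₂.2 ⟨i, j, hi, by constructor <;> linarith [hj.1, hj.2]⟩
  · -- the two intervals meet in at most one endpoint
    rcases le_or_gt s (a i - d j) with hs | hs
    · refine measure_mono_null (fun ξ hξ => ?_) (measure_singleton (a i))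
      exact le_antisymm (by linarith [hξ.2.2]) hξ.1.1
    · refine measure_mono_null (fun ξ hξ => ?_) (measure_singleton (b i))
      exact le_antisymm hξ.1.2 (by linarith [hξ.2.1, H i j hs])

lemma Int.eq_of_mul_mem_Ioo {K : Type*} [Field K] [LinearOrder K] [IsStrictOrderedRing K]
    {q : K} (hq : 0 < q) {j k : ℤ} (h : k * q ∈ Ioo ((j - 1) * q) ((j + 1) * q)) : k = j := by
  have h1 : (j : K) - 1 < k := _root_.lt_of_mul_lt_mul_right h.1 hq.le
  have h2 : (k : K) < j + 1 := _root_.lt_of_mul_lt_mul_right h.2 hq.le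
  have : j - 1 < k ∧ k < j + 1 := ⟨by exact_mod_cast h1, by exact_mod_cast h2⟩
  omega

lemma pow_sub_one_eq_mul_pow_sub_two {R : Type*} [Monoid R] (a : R) {n : ℕ} (hn : 2 ≤ n) :
    a ^ (n - 1) = a * a ^ (n - 2) := by
  rw [← pow_succ']; congr 1; omega

lemma pow_eq_sq_mul_pow_sub_two {R : Type*} [Monoid R] (a : R) {n : ℕ} (hn : 2 ≤ n) :
    a ^ n = a ^ 2 * a ^ (n - 2) := by
  rw [← pow_add]; congr 1; omega

section specE

variable {ψh : ℝ → ℂ} {k : ℤ}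

lemma neg_mem_specE (hk : k ∈ specE ψh) : -k ∈ specE ψh := by
  have : {ξ : ℝ | ψh ξ ≠ 0 ∧ ψh (ξ - 2 * ((-k : ℤ) : ℝ) * π) ≠ 0} =
      (· + 2 * k * π) ⁻¹' {ξ | ψh ξ ≠ 0 ∧ ψh (ξ - 2 * (k : ℝ) * π) ≠ 0} := by
    ext ξ
    simp only [mem_ofPred_eq, mem_preimage, Int.cast_neg, add_sub_cancel_right]
    rw [and_comm, mul_neg, neg_mul, sub_neg_eq_add]
  rw [specE, mem_ofPred_eq, this, measure_preimage_add_right]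
  exact hk

lemma mem_specE_of_forall_Icc {x y : ℝ} (hxy : x < y)
    (h : ∀ ξ ∈ Icc x y, ψh ξ ≠ 0 ∧ ψh (ξ - 2 * k * π) ≠ 0) : k ∈ specE ψh :=
  (Real.volume_Icc (a := x) ▸ ENNReal.ofReal_pos.2 (sub_pos.2 hxy)).trans_le (measure_mono h)

end specE

noncomputable def psiUnit (n : ℕ) : ℝ := π / (2 ^ n - 1)

/-- The support of `ψ̂_n` in units of `u = psiUnit n`, where `M = 2^(n-2)`: the three pieces
where `ψ̂_n = 1`, the three where `ψ̂_n = 1/√2`, and the one where `ψ̂_n = -1/√2`. -/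
def psiSupport (M u : ℝ) : Set ℝ :=
  (Icc (-(4 * M) * u) (-(2 * M) * u) ∪ Icc ((8 * M ^ 2 - 4 * M) * u) ((8 * M ^ 2 - M) * u) ∪
      Icc ((8 * M ^ 2 - 1) * u) (8 * M ^ 2 * u)) ∪
    (Icc (M * u) ((2 * M - 1) * u) ∪ Icc (2 * M * u) ((4 * M - 2) * u) ∪
      Icc ((8 * M ^ 2 - M) * u) ((8 * M ^ 2 - 1) * u)) ∪
    Icc ((16 * M ^ 2 - 2 * M) * u) ((16 * M ^ 2 - 2) * u)

lemma psiSupport_subset {M u : ℝ} (hM : 1 ≤ M) (hu : 0 ≤ u) :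
    psiSupport M u ⊆ ⋃ i, Icc (![-(4 * M), 8 * M ^ 2 - 4 * M, 16 * M ^ 2 - 2 * M] i * u)
      (![4 * M - 2, 8 * M ^ 2, 16 * M ^ 2 - 2] i * u) := by
  intro ξ hξ
  simp only [psiSupport, mem_union, mem_Icc] at hξ
  simp only [mem_iUnion, Fin.exists_fin_succ, Fin.exists_fin_zero, mem_Icc,
    Matrix.cons_val_zero, Matrix.cons_val_succ, or_false]
  rcases hξ with (((h | h) | h) | ((h | h) | h)) | h
  · exact Or.inl ⟨h.1, by nlinarith [h.2]⟩
  · exact Or.inr (Or.inl ⟨h.1, by nlinarith [h.2]⟩)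
  · exact Or.inr (Or.inl ⟨by nlinarith [h.1], h.2⟩)
  · exact Or.inl ⟨by nlinarith [h.1], by nlinarith [h.2]⟩
  · exact Or.inl ⟨by nlinarith [h.1], h.2⟩
  · exact Or.inr (Or.inl ⟨by nlinarith [h.1], by nlinarith [h.2]⟩)
  · exact Or.inr (Or.inr h)

section psiSupport

variable {ψh : ℝ → ℂ} {M : ℤ} {u : ℝ}

lemma specE_subset_of_support_subset_psiSupport (hM : 1 ≤ M) (hu : 0 < u) (hπ : π = (4 * M - 1) * u)
    (hψ : ∀ ξ, ψh ξ ≠ 0 → ξ ∈ psiSupport M u) :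
    specE ψh ⊆ {0, M, -M, 2 * M, -(2 * M)} := by
  intro k hk
  have hM' : (1 : ℝ) ≤ M := by exact_mod_cast hM
  have hcover := fun ξ hξ => psiSupport_subset hM' hu.le (hψ ξ hξ)
  -- `ξ` lies in block `i` and `ξ - 2kπ` in block `j`
  obtain ⟨i, j, h1, h2⟩ := exists_sub_lt_lt_sub_of_volume_pos hcover hcover hk
  have hq : 0 < (8 * M - 2) * u := mul_pos (by linarith) hu
  have hshift : 2 * (k : ℝ) * π = k * ((8 * M - 2) * u) := by rw [hπ]; ring
  rw [hshift] at h1 h2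
  simp only [mem_insert_iff, mem_singleton_iff]
  fin_cases i <;> fin_cases j <;>
    simp only [Fin.zero_eta, Fin.mk_one, Fin.reduceFinMk, Matrix.cons_val_zero,
      Matrix.cons_val_one, Matrix.cons_val_two, Matrix.head_cons, Matrix.tail_cons] at h1 h2
  · exact Or.inl (Int.eq_of_mul_mem_Ioo hq ⟨by push_cast; nlinarith, by push_cast; nlinarith⟩)
  · exact Or.inr (Or.inr (Or.inl
      (Int.eq_of_mul_mem_Ioo hq ⟨by push_cast; nlinarith, by push_cast; nlinarith⟩)))
  · exact Or.inr (Or.inr (Or.inr (Or.inr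
      (Int.eq_of_mul_mem_Ioo hq ⟨by push_cast; nlinarith, by push_cast; nlinarith⟩))))
  · exact Or.inr (Or.inl (Int.eq_of_mul_mem_Ioo hq ⟨by nlinarith, by nlinarith⟩))
  · exact Or.inl (Int.eq_of_mul_mem_Ioo hq ⟨by push_cast; nlinarith, by push_cast; nlinarith⟩)
  · obtain rfl : k = -M :=
      Int.eq_of_mul_mem_Ioo hq ⟨by push_cast; nlinarith, by push_cast; nlinarith⟩
    push_cast at h2
    nlinarith
  · exact Or.inr (Or.inr (Or.inr (Or.inl
      (Int.eq_of_mul_mem_Ioo hq ⟨by push_cast; nlinarith, by push_cast; nlinarith⟩))))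
  · obtain rfl : k = M := Int.eq_of_mul_mem_Ioo hq ⟨by nlinarith, by nlinarith⟩
    nlinarith
  · exact Or.inl (Int.eq_of_mul_mem_Ioo hq ⟨by push_cast; nlinarith, by push_cast; nlinarith⟩)

lemma subset_specE_of_psiSupport_subset_support (hM : 2 ≤ M) (hu : 0 < u) (hπ : π = (4 * M - 1) * u)
    (hψ : ∀ ξ ∈ psiSupport M u, ψh ξ ≠ 0) :
    {0, M, -M, 2 * M, -(2 * M)} ⊆ specE ψh := by
  have hM' : (2 : ℝ) ≤ M := by exact_mod_cast hM
  have hψ₅ : ∀ ξ ∈ Icc (2 * (M : ℝ) * u) ((4 * M - 2) * u), ψh ξ ≠ 0 := fun ξ hξ =>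
    hψ ξ (by simp only [psiSupport, mem_union]; exact Or.inl (Or.inr (Or.inl (Or.inr hξ))))
  have h0 : 0 ∈ specE ψh := mem_specE_of_forall_Icc (by nlinarith) fun ξ hξ =>
    ⟨hψ₅ ξ hξ, hψ₅ _ (by simpa using hξ)⟩
  have hMmem : M ∈ specE ψh := mem_specE_of_forall_Icc (x := (8 * M ^ 2 - M) * u)
      (y := (8 * M ^ 2 - 1) * u) (by nlinarith) fun ξ hξ => by
    refine ⟨hψ ξ ?_, hψ _ ?_⟩ <;> simp only [psiSupport, mem_union]
    · exact Or.inl (Or.inr (Or.inr hξ))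
    · rw [hπ]
      exact Or.inl (Or.inr (Or.inl (Or.inl ⟨by nlinarith [hξ.1], by nlinarith [hξ.2]⟩)))
  have h2Mmem : 2 * M ∈ specE ψh := mem_specE_of_forall_Icc (x := (16 * M ^ 2 - 2 * M) * u)
      (y := (16 * M ^ 2 - 2) * u) (by nlinarith) fun ξ hξ => by
    refine ⟨hψ ξ ?_, hψ₅ _ ?_⟩
    · simp only [psiSupport, mem_union]
      exact Or.inr hξ
    · push_cast
      rw [hπ]
      exact ⟨by nlinarith [hξ.1], by nlinarith [hξ.2]⟩
  rintro k (rfl | rfl | rfl | rfl | rfl)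
  exacts [h0, hMmem, neg_mem_specE hMmem, h2Mmem, neg_mem_specE h2Mmem]

end psiSupport

section psihat

variable {n : ℕ}

lemma psiUnit_pos (hn : 1 ≤ n) : 0 < psiUnit n :=
  div_pos pi_pos (sub_pos.2 (one_lt_pow₀ one_lt_two (by omega)))

lemma two_pow_eq_four_mul (hn : 2 ≤ n) : (2 : ℝ) ^ n = 4 * 2 ^ (n - 2) := by
  rw [pow_eq_sq_mul_pow_sub_two 2 hn]; norm_num

lemma pi_eq_mul_psiUnit (hn : 2 ≤ n) : π = (4 * 2 ^ (n - 2) - 1) * psiUnit n := by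
  rw [psiUnit, ← two_pow_eq_four_mul hn, mul_div_cancel₀]
  exact (sub_pos.2 (one_lt_pow₀ one_lt_two (by omega))).ne'

lemma psihat_ne_zero_iff (hn : 2 ≤ n) (ξ : ℝ) :
    psihat n ξ ≠ 0 ↔ ξ ∈ psiSupport (2 ^ (n - 2)) (psiUnit n) := by
  have h1 := pow_sub_one_eq_mul_pow_sub_two (2 : ℝ) hn
  have h2 := two_pow_eq_four_mul hn
  have ha : aN n = 2 * 2 ^ (n - 2) * psiUnit n := by rw [aN, psiUnit, h1, h2]; ring
  have hb : bN n = 4 * 2 ^ (n - 2) * psiUnit n := by rw [bN, ha]; ring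
  have hc : cN n = (8 * (2 ^ (n - 2)) ^ 2 - 4 * 2 ^ (n - 2)) * psiUnit n := by
    rw [cN, psiUnit, h1, h2]; ring
  have hd : dN n = 8 * (2 ^ (n - 2)) ^ 2 * psiUnit n := by rw [dN, ha, h2]; ring
  have he : eN n = (4 * 2 ^ (n - 2) - 2) * psiUnit n := by rw [eN, psiUnit, h2]; ring
  have hs : Real.sqrt 2 ≠ 0 := by positivity
  simp only [psihat, gfun, psiSupport, ha, hb, hc, hd, he, h1, h2, pi_eq_mul_psiUnit hn]
  ring_nf
  split_ifs <;> simp_all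

lemma specE_psihat (hn : 3 ≤ n) :
    specE (psihat n) =
      ({0, 2 ^ (n - 2), -(2 ^ (n - 2)), 2 * 2 ^ (n - 2), -(2 * 2 ^ (n - 2))} : Set ℤ) := by
  have hM : (2 : ℤ) ≤ 2 ^ (n - 2) := le_self_pow₀ (by norm_num) (by omega)
  have hcast : (((2 : ℤ) ^ (n - 2) : ℤ) : ℝ) = 2 ^ (n - 2) := by push_cast; rfl
  have hsupp : ∀ ξ, psihat n ξ ≠ 0 ↔ ξ ∈ psiSupport ((2 : ℤ) ^ (n - 2) : ℤ) (psiUnit n) := by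
    rw [hcast]; exact psihat_ne_zero_iff (by omega)
  have hπ : π = (4 * (((2 : ℤ) ^ (n - 2) : ℤ) : ℝ) - 1) * psiUnit n := by
    rw [hcast]; exact pi_eq_mul_psiUnit (by omega)
  exact (specE_subset_of_support_subset_psiSupport (by omega) (psiUnit_pos (by omega)) hπ
    fun ξ => (hsupp ξ).1).antisymm
    (subset_specE_of_psiSupport_subset_support hM (psiUnit_pos (by omega)) hπ fun ξ => (hsupp ξ).2)

end psihat

/-- `𝓔(ψ_n) = {0, ±2^(n-2), ±2^(n-1)}`; consequently every element of
`𝓔(ψ_n)` is divisible by `2^(n-2)`, and `2^(n-2) ∈ 𝓔(ψ_n)` is not divisible by `2^(n-1)`. -/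
theorem specE_psi_n (n : ℕ) (hn : 3 ≤ n) :
    specE (psihat n) =
      ({0, 2 ^ (n - 2), -(2 ^ (n - 2)), 2 ^ (n - 1), -(2 ^ (n - 1))} : Set ℤ) ∧
    (∀ k ∈ specE (psihat n), (2 : ℤ) ^ (n - 2) ∣ k) ∧
    (2 : ℤ) ^ (n - 2) ∈ specE (psihat n) ∧
    ¬ ((2 : ℤ) ^ (n - 1) ∣ (2 : ℤ) ^ (n - 2)) := by
  have h21 := pow_sub_one_eq_mul_pow_sub_two (2 : ℤ) (by omega : 2 ≤ n)
  refine ⟨by rw [specE_psihat hn, h21], ?_, by simp [specE_psihat hn], ?_⟩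
  · rw [specE_psihat hn]
    rintro k (rfl | rfl | rfl | rfl | rfl) <;> simp
  · rw [pow_dvd_pow_iff two_ne_zero (by norm_num [Int.isUnit_iff])]
    omega
end
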